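/- arXiv:2203.09723 — 2 statements merged into one kernel-verified Lean document; each statement's English description precedes it below -/
import Mathlib

section
/- For any real number θ₀ with 0 < |θ₀| < π and any real θ, cos θ ≥ -(1/2)(sin θ₀ / θ₀)θ² + cos θ₀ + (1/2)θ₀ sin θ₀, with equality if and only if |θ| = |θ₀|. -/
/-!
Put `c = sin θ₀ / θ₀` and `f s = cos s + c s² / 2`; the claim is that the even function `f`
attains its minimum exactly at `± θ₀`. Since `f' s = s (c - sin s / s)` and `sin s / s` is
strictly decreasing on `(0, π]`, `f` decreases on `[0, |θ₀|]` and increases on `[|θ₀|, π]`.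
Beyond `π` nothing is lost: there `f s ≥ -1 + c π² / 2 = f π`.
-/

open Real Set

theorem mul_cos_lt_sin {x : ℝ} (hx₀ : 0 < x) (hxπ : x < π) : x * cos x < sin x := by
  rcases lt_or_ge x (π / 2) with hx | hx
  · have hcos : 0 < cos x := cos_pos_of_mem_Ioo ⟨by linarith, hx⟩
    simpa only [tan_eq_sin_div_cos, lt_div_iff₀ hcos] using lt_tan hx₀ hx
  · have hcos : cos x ≤ 0 := cos_nonpos_of_pi_div_two_le_of_le hx (by linarith)
    nlinarith [sin_pos_of_pos_of_lt_pi hx₀ hxπ]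

theorem strictAntiOn_sin_div_self : StrictAntiOn (fun x => sin x / x) (Ioc 0 π) := by
  refine strictAntiOn_of_deriv_neg (convex_Ioc 0 π)
    (continuousOn_sin.div continuousOn_id fun x hx => hx.1.ne') fun x hx => ?_
  rw [interior_Ioc] at hx
  have hderiv : HasDerivAt (fun x => sin x / x) ((cos x * x - sin x * 1) / x ^ 2) x :=
    (hasDerivAt_sin x).div (hasDerivAt_id' x) hx.1.ne'
  rw [hderiv.deriv]
  have := mul_cos_lt_sin hx.1 hx.2
  exact div_neg_of_neg_of_pos (by linarith) (pow_pos hx.1 2)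

theorem sin_abs_div_abs (x : ℝ) : sin |x| / |x| = sin x / x := by
  rcases abs_cases x with ⟨hx, -⟩ | ⟨hx, -⟩ <;> simp [hx, neg_div_neg_eq]

theorem hasDerivAt_cos_add_sin_div_mul_sq (a x : ℝ) :
    HasDerivAt (fun s => cos s + sin a / a / 2 * s ^ 2) (sin a / a * x - sin x) x :=
  ((hasDerivAt_cos x).fun_add (((hasDerivAt_id' x).fun_pow 2).const_mul _)).congr_deriv
    (by norm_num; ring)

section

variable {a : ℝ}

theorem strictAntiOn_cos_add_sin_div_mul_sq (haπ : a ≤ π) :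
    StrictAntiOn (fun s => cos s + sin a / a / 2 * s ^ 2) (Icc 0 a) := by
  refine strictAntiOn_of_deriv_neg (convex_Icc 0 a) (by fun_prop) fun x hx => ?_
  rw [interior_Icc] at hx
  rw [(hasDerivAt_cos_add_sin_div_mul_sq a x).deriv, sub_neg, ← lt_div_iff₀ hx.1]
  exact strictAntiOn_sin_div_self ⟨hx.1, hx.2.le.trans haπ⟩ ⟨hx.1.trans hx.2, haπ⟩ hx.2

theorem strictMonoOn_cos_add_sin_div_mul_sq (ha : 0 < a) :
    StrictMonoOn (fun s => cos s + sin a / a / 2 * s ^ 2) (Icc a π) := by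
  refine strictMonoOn_of_deriv_pos (convex_Icc a π) (by fun_prop) fun x hx => ?_
  rw [interior_Icc] at hx
  have hx₀ : 0 < x := ha.trans hx.1
  rw [(hasDerivAt_cos_add_sin_div_mul_sq a x).deriv, sub_pos, ← div_lt_iff₀ hx₀]
  exact strictAntiOn_sin_div_self ⟨ha, hx.1.le.trans hx.2.le⟩ ⟨hx₀, hx.2.le⟩ hx.1

theorem cos_add_sin_div_mul_sq_lt_of_nonneg (ha : 0 < a) (haπ : a < π) {t : ℝ} (ht : 0 ≤ t)
    (hta : t ≠ a) :
    cos a + sin a / a / 2 * a ^ 2 < cos t + sin a / a / 2 * t ^ 2 := by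
  have hmono := strictMonoOn_cos_add_sin_div_mul_sq ha
  rcases hta.lt_or_gt with hta | hat
  · exact strictAntiOn_cos_add_sin_div_mul_sq haπ.le ⟨ht, hta.le⟩ ⟨ht.trans hta.le, le_rfl⟩ hta
  rcases le_or_gt t π with htπ | hπt
  · exact hmono ⟨le_rfl, haπ.le⟩ ⟨hat.le, htπ⟩ hat
  have hlt_pi : cos a + sin a / a / 2 * a ^ 2 < cos π + sin a / a / 2 * π ^ 2 :=
    hmono ⟨le_rfl, haπ.le⟩ ⟨haπ.le, le_rfl⟩ haπ
  have hc : 0 < sin a / a := div_pos (sin_pos_of_pos_of_lt_pi ha haπ) ha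
  have hsq : π ^ 2 < t ^ 2 := by gcongr
  rw [cos_pi] at hlt_pi
  nlinarith [neg_one_le_cos t]

theorem cos_add_sin_div_mul_sq_lt (ha₀ : a ≠ 0) (haπ : |a| < π) {t : ℝ} (hta : |t| ≠ |a|) :
    cos a + sin a / a / 2 * a ^ 2 < cos t + sin a / a / 2 * t ^ 2 := by
  simpa only [← cos_abs a, ← cos_abs t, ← sq_abs a, ← sq_abs t, sin_abs_div_abs] using
    cos_add_sin_div_mul_sq_lt_of_nonneg (abs_pos.mpr ha₀) haπ (abs_nonneg t) hta

end

theorem cos_quadratic_minorant (θ₀ θ : ℝ) (h0 : 0 < |θ₀|) (hπ : |θ₀| < π) :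
    Real.cos θ ≥ -(1/2) * (Real.sin θ₀ / θ₀) * θ^2 + Real.cos θ₀ + (1/2) * θ₀ * Real.sin θ₀ ∧
    (Real.cos θ = -(1/2) * (Real.sin θ₀ / θ₀) * θ^2 + Real.cos θ₀ + (1/2) * θ₀ * Real.sin θ₀ ↔
      |θ| = |θ₀|) := by
  have hθ₀ : θ₀ ≠ 0 := abs_pos.mp h0
  have hrhs : -(1/2) * (sin θ₀ / θ₀) * θ ^ 2 + cos θ₀ + (1/2) * θ₀ * sin θ₀ =
      cos θ₀ + sin θ₀ / θ₀ / 2 * θ₀ ^ 2 - sin θ₀ / θ₀ / 2 * θ ^ 2 := by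
    field_simp
    ring
  rw [hrhs]
  rcases eq_or_ne |θ| |θ₀| with h | h
  · have hcos : cos θ = cos θ₀ := by rw [← cos_abs, h, cos_abs]
    have hsq : θ ^ 2 = θ₀ ^ 2 := by rw [← sq_abs, h, sq_abs]
    rw [hcos, hsq]
    simp [h]
  · have := cos_add_sin_div_mul_sq_lt hθ₀ hπ h
    exact ⟨by linarith, iff_of_false (by linarith) h⟩
end

section
/- For a finite sum J(τ) = Σ_k A_k cos(ω_k τ + φ_k) with A_k ≥ 0, and auxiliary parameters θ_k satisfying 0 < |θ_k| ≤ π chosen so that |ω_k τ₀ + φ_k + 2ν_k π| ≤ π for integers ν_k, the function Q(τ) = Σ_k [-(A_k/2)(sin θ_k/θ_k)(ω_k τ + φ_k + 2ν_k π)² + A_k (cos θ_k + (1/2)θ_k sin θ_k)] satisfies J(τ) ≥ Q(τ) for all real τ, with equality at τ = τ₀ when θ_k = ω_k τ₀ + φ_k + 2ν_k π for all k. -/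
/-!
Fix `t ∈ (0, π]` and put `c = sin t / (2 t) ≥ 0`. Termwise the claim says that
`F y = cos y + c y²` attains its minimum over `y ≥ 0` at `y = t`. Since `sin` is concave on
`[0, π]`, `sin y / y` decreases there, so `F' y = y (sin t / t - sin y / y)` is `≤ 0` on `(0, t)`
and `≥ 0` on `(t, π)`; past `π`, `F y ≥ -1 + c π² = F π`. Evenness reduces `θ < 0` and `x < 0`
to this case, periodicity of `cos` absorbs the shifts `2 ν_k π`, and `A_k ≥ 0` lets the termwise
bounds be summed.
-/

open Real Set

lemma antitoneOn_sin_div_self : AntitoneOn (fun x => sin x / x) (Ioc 0 π) := by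
  intro a ha b hb hab
  have h := strictConcaveOn_sin_Icc.concaveOn.antitoneOn_slope_gt (x := 0) ⟨le_rfl, pi_pos.le⟩
    ⟨Ioc_subset_Icc_self ha, ha.1⟩ ⟨Ioc_subset_Icc_self hb, hb.1⟩ hab
  simpa [slope_def_field] using h

lemma cos_add_mul_sq_le {t x : ℝ} (ht : 0 < t) (htπ : t ≤ π) (hx : 0 ≤ x) :
    cos t + sin t / (2 * t) * t ^ 2 ≤ cos x + sin t / (2 * t) * x ^ 2 := by
  set c := sin t / (2 * t)
  set F : ℝ → ℝ := fun y => cos y + c * y ^ 2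
  have hF : ∀ y, HasDerivAt F (-sin y + c * (2 * y)) y := fun y =>
    ((hasDerivAt_cos y).add ((hasDerivAt_pow 2 y).const_mul c)).congr_deriv (by simp)
  have hF' : ∀ D, ∀ y ∈ interior D, HasDerivWithinAt F (-sin y + c * (2 * y)) (interior D) y :=
    fun _ y _ => (hF y).hasDerivWithinAt
  have hFc : Continuous F := by fun_prop
  have hF'_eq : ∀ y, 0 < y → -sin y + c * (2 * y) = y * (sin t / t - sin y / y) := by
    intro y hy
    simp only [c]
    field_simp
    ring
  have hc : 0 ≤ c := div_nonneg (sin_nonneg_of_nonneg_of_le_pi ht.le htπ) (by positivity)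
  have hanti : AntitoneOn F (Icc 0 t) := by
    refine antitoneOn_of_hasDerivWithinAt_nonpos (convex_Icc 0 t) hFc.continuousOn (hF' _) ?_
    intro y hy
    rw [interior_Icc] at hy
    rw [hF'_eq y hy.1]
    exact mul_nonpos_of_nonneg_of_nonpos hy.1.le (sub_nonpos.2 <|
      antitoneOn_sin_div_self ⟨hy.1, hy.2.le.trans htπ⟩ ⟨ht, htπ⟩ hy.2.le)
  have hmono : MonotoneOn F (Icc t π) := by
    refine monotoneOn_of_hasDerivWithinAt_nonneg (convex_Icc t π) hFc.continuousOn (hF' _) ?_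
    intro y hy
    rw [interior_Icc] at hy
    rw [hF'_eq y (ht.trans hy.1)]
    exact mul_nonneg (ht.trans hy.1).le (sub_nonneg.2 <|
      antitoneOn_sin_div_self ⟨ht, htπ⟩ ⟨ht.trans hy.1, hy.2.le⟩ hy.1.le)
  change F t ≤ F x
  rcases le_total x t with hxt | htx
  · exact hanti ⟨hx, hxt⟩ ⟨ht.le, le_rfl⟩ hxt
  rcases le_total x π with hxπ | hπx
  · exact hmono ⟨le_rfl, htπ⟩ ⟨htx, hxπ⟩ htx
  · calc F t ≤ F π := hmono ⟨le_rfl, htπ⟩ ⟨htπ, le_rfl⟩ htπ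
      _ = -1 + c * π ^ 2 := by simp [F]
      _ ≤ F x := add_le_add (neg_one_le_cos x)
          (mul_le_mul_of_nonneg_left (pow_le_pow_left₀ pi_pos.le hπx 2) hc)

noncomputable def cosQuadMinorant (θ x : ℝ) : ℝ := -(1 / 2) * (sin θ / θ) * x ^ 2 + (cos θ + 1 / 2 * θ * sin θ)

lemma cosQuadMinorant_neg_left (θ x : ℝ) : cosQuadMinorant (-θ) x = cosQuadMinorant θ x := by
  simp only [cosQuadMinorant, sin_neg, cos_neg, neg_div_neg_eq]
  ring

lemma cosQuadMinorant_self (θ : ℝ) : cosQuadMinorant θ θ = cos θ := by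
  rcases eq_or_ne θ 0 with rfl | hθ
  · simp [cosQuadMinorant]
  · simp only [cosQuadMinorant]
    field_simp
    ring

lemma cosQuadMinorant_le_cos_of_pos {t : ℝ} (ht : 0 < t) (htπ : t ≤ π) (x : ℝ) :
    cosQuadMinorant t x ≤ cos x := by
  have h := cos_add_mul_sq_le ht htπ (abs_nonneg x)
  rw [cos_abs, sq_abs] at h
  have hform : cosQuadMinorant t x = cos t + sin t / (2 * t) * t ^ 2 - sin t / (2 * t) * x ^ 2 := by
    simp only [cosQuadMinorant]
    field_simp
    ring
  linarith

lemma cosQuadMinorant_le_cos {θ : ℝ} (hθ : θ ≠ 0) (hθπ : |θ| ≤ π) (x : ℝ) :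
    cosQuadMinorant θ x ≤ cos x := by
  rcases hθ.lt_or_gt with hneg | hpos
  · rw [← cosQuadMinorant_neg_left]
    exact cosQuadMinorant_le_cos_of_pos (neg_pos.2 hneg) (abs_of_neg hneg ▸ hθπ) x
  · exact cosQuadMinorant_le_cos_of_pos hpos (abs_of_pos hpos ▸ hθπ) x

theorem auxiliary_function_for_gcc_general (n : ℕ) (A ω φ : Fin n → ℝ) (hA : ∀ k, 0 ≤ A k)
    (θ : Fin n → ℝ) (ν : Fin n → ℤ) (τ₀ : ℝ)
    (hθ0 : ∀ k, 0 < |θ k|) (hθπ : ∀ k, |θ k| ≤ π)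
    (htangent : ∀ k, θ k = ω k * τ₀ + φ k + 2 * (ν k) * π) :
    (∀ τ : ℝ,
      (∑ k, A k * Real.cos (ω k * τ + φ k)) ≥
      (∑ k, (-(A k / 2) * (Real.sin (θ k) / θ k) * (ω k * τ + φ k + 2 * (ν k) * π)^2
        + A k * (Real.cos (θ k) + (1/2) * θ k * Real.sin (θ k))))) ∧
    (∑ k, A k * Real.cos (ω k * τ₀ + φ k)) =
      (∑ k, (-(A k / 2) * (Real.sin (θ k) / θ k) * (ω k * τ₀ + φ k + 2 * (ν k) * π)^2
        + A k * (Real.cos (θ k) + (1/2) * θ k * Real.sin (θ k)))) := by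
  have hshift : ∀ k τ, cos (ω k * τ + φ k) = cos (ω k * τ + φ k + 2 * (ν k : ℝ) * π) := by
    intro k τ
    rw [show 2 * (ν k : ℝ) * π = ν k * (2 * π) by ring, cos_add_int_mul_two_pi]
  have hsummand : ∀ k x, -(A k / 2) * (sin (θ k) / θ k) * x ^ 2
      + A k * (cos (θ k) + 1 / 2 * θ k * sin (θ k)) = A k * cosQuadMinorant (θ k) x := by
    intro k x
    simp only [cosQuadMinorant]
    ring
  refine ⟨fun τ => Finset.sum_le_sum fun k _ => ?_, Finset.sum_congr rfl fun k _ => ?_⟩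
  · rw [hsummand, hshift k τ]
    exact mul_le_mul_of_nonneg_left
      (cosQuadMinorant_le_cos (abs_pos.1 (hθ0 k)) (hθπ k) _) (hA k)
  · rw [hsummand, hshift k τ₀, ← htangent, cosQuadMinorant_self]

theorem auxiliary_function_for_gcc (n : ℕ) (A ω φ : Fin n → ℝ) (hA : ∀ k, 0 ≤ A k)
    (θ : Fin n → ℝ) (ν : Fin n → ℤ) (τ₀ : ℝ)
    (hθ0 : ∀ k, 0 < |θ k|) (hθπ : ∀ k, |θ k| ≤ π)
    (hwrap : ∀ k, |ω k * τ₀ + φ k + 2 * (ν k) * π| ≤ π)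
    (htangent : ∀ k, θ k = ω k * τ₀ + φ k + 2 * (ν k) * π) :
    (∀ τ : ℝ,
      (∑ k, A k * Real.cos (ω k * τ + φ k)) ≥
      (∑ k, (-(A k / 2) * (Real.sin (θ k) / θ k) * (ω k * τ + φ k + 2 * (ν k) * π)^2
        + A k * (Real.cos (θ k) + (1/2) * θ k * Real.sin (θ k))))) ∧
    (∑ k, A k * Real.cos (ω k * τ₀ + φ k)) =
      (∑ k, (-(A k / 2) * (Real.sin (θ k) / θ k) * (ω k * τ₀ + φ k + 2 * (ν k) * π)^2
        + A k * (Real.cos (θ k) + (1/2) * θ k * Real.sin (θ k)))) :=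
  auxiliary_function_for_gcc_general n A ω φ hA θ ν τ₀ hθ0 hθπ htangent
end
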